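/- Let I, J ⊆ ℝ be open intervals, let I₁ and I₀ be C^∞ on J, and let F : I → ℝ be C^∞ with F' never zero and F(I) ⊆ J. Define Ĩ₁(x) = F'(x)²·I₁(F(x)) - 2S(F)(x) and Ĩ₀(x) = F'(x)F''(x)·I₁(F(x)) + F'(x)³·I₀(F(x)) - (S(F))'(x), where S(F) = F'''/F' - (3/2)(F''/F')². Let r = I₁' - 2I₀ and r̃ = Ĩ₁' - 2Ĩ₀, and suppose r(F(x)) ≠ 0 for all x ∈ I. Define L₂ = (27I₁'r³ - 18I₁r²r' + 56(r')³ - 72r''r'r + 18r'''r²)/r⁴ from I₁, r, and L̃₂ analogously from Ĩ₁, r̃. Then L₂ is an absolute invariant: for all x ∈ I, L̃₂(x) = L₂(F(x)). -/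

import Mathlib

/-!
Under `x ↦ F x` the relative invariant `r = I₁' - 2 I₀` has weight 3, `r̃ = F'³ · (r ∘ F)`: in
`Ĩ₁' - 2 Ĩ₀` the Schwarzian terms cancel. Hence `v = r' / (3 r)` transforms like an affine
connection, `ṽ = F' · (v ∘ F) + F'' / F'`, and `g ↦ g' - k v g` sends relative invariants of
weight `k` to relative invariants of weight `k + 1`. Since `v' - v² / 2` picks up exactly the
Schwarzian `S(F)`, `K = I₁ + 2 v' - v²` is a relative invariant of weight 2. Finally
`L₂ = 27 (K' - 2 v K) / r` is a quotient of two relative invariants of weight 3.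
-/

open Set
open scoped ContDiff

section SmoothOnOpen

variable {U : Set ℝ} {f g : ℝ → ℝ} {x g' : ℝ}

theorem ContDiffOn.hasDerivAt_deriv (hf : ContDiffOn ℝ ∞ f U) (hU : IsOpen U) (hx : x ∈ U) :
    HasDerivAt f (deriv f x) x :=
  ((hf.differentiableOn (by simp)).differentiableAt (hU.mem_nhds hx)).hasDerivAt

theorem ContDiffOn.deriv_of_isOpen' (hf : ContDiffOn ℝ ∞ f U) (hU : IsOpen U) :
    ContDiffOn ℝ ∞ (deriv f) U :=
  hf.deriv_of_isOpen hU le_rfl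

theorem HasDerivAt.congr_of_eqOn (hg : HasDerivAt g g' x) (h : EqOn f g U) (hU : IsOpen U)
    (hx : x ∈ U) : HasDerivAt f g' x :=
  hg.congr_of_eventuallyEq (h.eventuallyEq_of_mem (hU.mem_nhds hx))

end SmoothOnOpen

noncomputable section

namespace ThirdOrderLinearODE

def pullback (k : ℕ) (F g : ℝ → ℝ) (x : ℝ) : ℝ := deriv F x ^ k * g (F x)

def schwarzian (F : ℝ → ℝ) (x : ℝ) : ℝ :=
  deriv (deriv (deriv F)) x / deriv F x - 3 / 2 * (deriv (deriv F) x / deriv F x) ^ 2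

def relInvariant (I₁ I₀ : ℝ → ℝ) (x : ℝ) : ℝ := deriv I₁ x - 2 * I₀ x

def connection (r : ℝ → ℝ) (x : ℝ) : ℝ := deriv r x / (3 * r x)

def pullbackConnection (F v : ℝ → ℝ) (x : ℝ) : ℝ :=
  deriv F x * v (F x) + deriv (deriv F) x / deriv F x

def covDeriv (k : ℕ) (r g : ℝ → ℝ) (x : ℝ) : ℝ := deriv g x - k * connection r x * g x

def invariantK (I₁ r : ℝ → ℝ) (x : ℝ) : ℝ :=
  I₁ x + 2 * deriv (connection r) x - connection r x ^ 2

def invariantL₂ (I₁ r : ℝ → ℝ) (x : ℝ) : ℝ :=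
  (27 * deriv I₁ x * r x ^ 3 - 18 * I₁ x * r x ^ 2 * deriv r x + 56 * deriv r x ^ 3
    - 72 * deriv (deriv r) x * deriv r x * r x + 18 * deriv (deriv (deriv r)) x * r x ^ 2)
    / r x ^ 4

variable {U V : Set ℝ} {F : ℝ → ℝ}

theorem hasDerivAt_pullback (k : ℕ) {g : ℝ → ℝ} (hU : IsOpen U) (hV : IsOpen V)
    (hF : ContDiffOn ℝ ∞ F U) (hFUV : MapsTo F U V) (hg : ContDiffOn ℝ ∞ g V) {x : ℝ}
    (hx : x ∈ U) :
    HasDerivAt (pullback k F g)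
      (k * deriv F x ^ (k - 1) * deriv (deriv F) x * g (F x)
        + deriv F x ^ (k + 1) * deriv g (F x)) x := by
  have hF' := (hF.deriv_of_isOpen' hU).hasDerivAt_deriv hU hx
  have hgF := (hg.hasDerivAt_deriv hV (hFUV hx)).comp x (hF.hasDerivAt_deriv hU hx)
  refine ((hF'.pow k).mul hgF).congr_deriv ?_
  simp only [Function.comp_apply, Pi.pow_apply]
  ring

theorem hasDerivAt_deriv_div_deriv (hU : IsOpen U) (hF : ContDiffOn ℝ ∞ F U) {x : ℝ}
    (hx : x ∈ U) (hF'x : deriv F x ≠ 0) :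
    HasDerivAt (fun y => deriv (deriv F) y / deriv F y)
      (schwarzian F x + (deriv (deriv F) x / deriv F x) ^ 2 / 2) x := by
  have hF' := hF.deriv_of_isOpen' hU
  have hF'' := hF'.deriv_of_isOpen' hU
  refine ((hF''.hasDerivAt_deriv hU hx).div (hF'.hasDerivAt_deriv hU hx) hF'x).congr_deriv ?_
  unfold schwarzian
  field_simp
  ring

theorem contDiffOn_pullback (k : ℕ) {g : ℝ → ℝ} (hU : IsOpen U) (hF : ContDiffOn ℝ ∞ F U)
    (hg : ContDiffOn ℝ ∞ g V) (hFUV : MapsTo F U V) : ContDiffOn ℝ ∞ (pullback k F g) U :=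
  ((hF.deriv_of_isOpen' hU).pow k).mul (hg.comp hF hFUV)

theorem contDiffOn_schwarzian (hU : IsOpen U) (hF : ContDiffOn ℝ ∞ F U)
    (hF' : ∀ x ∈ U, deriv F x ≠ 0) : ContDiffOn ℝ ∞ (schwarzian F) U := by
  have h1 := hF.deriv_of_isOpen' hU
  have h2 := h1.deriv_of_isOpen' hU
  have h3 := h2.deriv_of_isOpen' hU
  exact (h3.div h1 hF').sub (contDiffOn_const.mul ((h2.div h1 hF').pow 2))

theorem contDiffOn_connection {r : ℝ → ℝ} (hU : IsOpen U) (hr : ContDiffOn ℝ ∞ r U)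
    (hr0 : ∀ x ∈ U, r x ≠ 0) : ContDiffOn ℝ ∞ (connection r) U :=
  (hr.deriv_of_isOpen' hU).div (contDiffOn_const.mul hr) fun x hx => by simp [hr0 x hx]

theorem contDiffOn_invariantK {I₁ r : ℝ → ℝ} (hU : IsOpen U) (hI₁ : ContDiffOn ℝ ∞ I₁ U)
    (hr : ContDiffOn ℝ ∞ r U) (hr0 : ∀ x ∈ U, r x ≠ 0) :
    ContDiffOn ℝ ∞ (invariantK I₁ r) U :=
  have hc := contDiffOn_connection hU hr hr0
  (hI₁.add (contDiffOn_const.mul (hc.deriv_of_isOpen' hU))).sub (hc.pow 2)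

theorem connection_eqOn_of_eqOn_pullback {r tr : ℝ → ℝ} (hU : IsOpen U) (hV : IsOpen V)
    (hF : ContDiffOn ℝ ∞ F U) (hF' : ∀ x ∈ U, deriv F x ≠ 0) (hFUV : MapsTo F U V)
    (hr : ContDiffOn ℝ ∞ r V) (hr0 : ∀ x ∈ U, r (F x) ≠ 0) (htr : EqOn tr (pullback 3 F r) U) :
    EqOn (connection tr) (pullbackConnection F (connection r)) U := by
  intro x hx
  have hd := (hasDerivAt_pullback 3 hU hV hF hFUV hr hx).congr_of_eqOn htr hU hx
  have := hF' x hx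
  have := hr0 x hx
  simp only [connection, pullbackConnection, hd.deriv, htr hx, pullback]
  field_simp
  ring

theorem invariantK_eqOn_pullback {I₁ r tI₁ tr : ℝ → ℝ} (hU : IsOpen U) (hV : IsOpen V)
    (hF : ContDiffOn ℝ ∞ F U) (hF' : ∀ x ∈ U, deriv F x ≠ 0) (hFUV : MapsTo F U V)
    (hc : ContDiffOn ℝ ∞ (connection r) V)
    (htI₁ : EqOn tI₁ (fun x => pullback 2 F I₁ x - 2 * schwarzian F x) U)
    (hctr : EqOn (connection tr) (pullbackConnection F (connection r)) U) :
    EqOn (invariantK tI₁ tr) (pullback 2 F (invariantK I₁ r)) U := by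
  intro x hx
  have hcF := (hc.hasDerivAt_deriv hV (hFUV hx)).comp x (hF.hasDerivAt_deriv hU hx)
  have hd := ((((hF.deriv_of_isOpen' hU).hasDerivAt_deriv hU hx).mul hcF).add
    (hasDerivAt_deriv_div_deriv hU hF hx (hF' x hx))).congr_of_eqOn hctr hU hx
  have := hF' x hx
  simp only [invariantK, hd.deriv, hctr hx, htI₁ hx, pullback, pullbackConnection,
    Function.comp_apply]
  field_simp
  ring

theorem covDeriv_eqOn_pullback (k : ℕ) {r tr g tg : ℝ → ℝ} (hU : IsOpen U) (hV : IsOpen V)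
    (hF : ContDiffOn ℝ ∞ F U) (hF' : ∀ x ∈ U, deriv F x ≠ 0) (hFUV : MapsTo F U V)
    (hg : ContDiffOn ℝ ∞ g V) (htg : EqOn tg (pullback k F g) U)
    (hctr : EqOn (connection tr) (pullbackConnection F (connection r)) U) :
    EqOn (covDeriv k tr tg) (pullback (k + 1) F (covDeriv k r g)) U := by
  intro x hx
  have hd := (hasDerivAt_pullback k hU hV hF hFUV hg hx).congr_of_eqOn htg hU hx
  have := hF' x hx
  simp only [covDeriv, hd.deriv, hctr hx, htg hx, pullback, pullbackConnection]
  cases k with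
  | zero => simp
  | succ n =>
    simp only [Nat.add_sub_cancel, pow_succ]
    field_simp
    ring

/-- `S` stands for the Schwarzian of `F`, but it cancels, so any differentiable `S` will do. -/
theorem relInvariant_eqOn_pullback {I₁ I₀ S tI₁ tI₀ : ℝ → ℝ} (hU : IsOpen U) (hV : IsOpen V)
    (hF : ContDiffOn ℝ ∞ F U) (hFUV : MapsTo F U V) (hI₁ : ContDiffOn ℝ ∞ I₁ V)
    (hS : DifferentiableOn ℝ S U) (htI₁ : EqOn tI₁ (fun x => pullback 2 F I₁ x - 2 * S x) U)
    (htI₀ : ∀ x ∈ U, tI₀ x = deriv F x * deriv (deriv F) x * I₁ (F x)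
      + deriv F x ^ 3 * I₀ (F x) - deriv S x) :
    EqOn (relInvariant tI₁ tI₀) (pullback 3 F (relInvariant I₁ I₀)) U := by
  intro x hx
  have hd := ((hasDerivAt_pullback 2 hU hV hF hFUV hI₁ hx).sub
    (((hS.differentiableAt (hU.mem_nhds hx)).hasDerivAt).const_mul 2)).congr_of_eqOn htI₁ hU hx
  simp only [relInvariant, hd.deriv, htI₀ x hx, pullback]
  ring

theorem invariantL₂_eqOn_covDeriv_div {I₁ r : ℝ → ℝ} (hU : IsOpen U)
    (hI₁ : DifferentiableOn ℝ I₁ U) (hr : ContDiffOn ℝ ∞ r U) (hr0 : ∀ x ∈ U, r x ≠ 0) :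
    EqOn (invariantL₂ I₁ r) (fun x => 27 * covDeriv 2 r (invariantK I₁ r) x / r x) U := by
  have hr1 := hr.deriv_of_isOpen' hU
  have dr : ∀ x ∈ U, HasDerivAt r (deriv r x) x := fun x hx => hr.hasDerivAt_deriv hU hx
  have dr1 : ∀ x ∈ U, HasDerivAt (deriv r) (deriv (deriv r) x) x :=
    fun x hx => hr1.hasDerivAt_deriv hU hx
  have dr2 : ∀ x ∈ U, HasDerivAt (deriv (deriv r)) (deriv (deriv (deriv r)) x) x :=
    fun x hx => (hr1.deriv_of_isOpen' hU).hasDerivAt_deriv hU hx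
  have dc : ∀ x ∈ U, HasDerivAt (connection r)
      ((deriv (deriv r) x * r x - deriv r x ^ 2) / (3 * r x ^ 2)) x := fun x hx => by
    have := hr0 x hx
    refine ((dr1 x hx).div ((dr x hx).const_mul 3) (by simp [this])).congr_deriv ?_
    field_simp
  intro x hx
  have dc' := ((((dr2 x hx).mul (dr x hx)).sub ((dr1 x hx).pow 2)).div
    (((dr x hx).pow 2).const_mul 3) (by simp [hr0 x hx])).congr_of_eqOn
    (fun y hy => (dc y hy).deriv) hU hx
  have dK : HasDerivAt (invariantK I₁ r) _ x :=
    ((hI₁.differentiableAt (hU.mem_nhds hx)).hasDerivAt.add (dc'.const_mul 2)).sub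
      ((dc x hx).pow 2)
  have := hr0 x hx
  simp only [invariantL₂, covDeriv]
  rw [dK.deriv]
  simp only [invariantK, (dc x hx).deriv, connection, Pi.pow_apply, Pi.mul_apply, Pi.sub_apply,
    Nat.cast_ofNat, Nat.reduceSub, pow_one]
  field_simp
  ring

theorem invariantL₂_eqOn_comp {I₁ r tI₁ tr : ℝ → ℝ} (hU : IsOpen U) (hV : IsOpen V)
    (hF : ContDiffOn ℝ ∞ F U) (hF' : ∀ x ∈ U, deriv F x ≠ 0) (hFUV : MapsTo F U V)
    (hI₁ : ContDiffOn ℝ ∞ I₁ V) (hr : ContDiffOn ℝ ∞ r V) (hr0 : ∀ u ∈ V, r u ≠ 0)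
    (htI₁ : EqOn tI₁ (fun x => pullback 2 F I₁ x - 2 * schwarzian F x) U)
    (htr : EqOn tr (pullback 3 F r) U) :
    EqOn (invariantL₂ tI₁ tr) (invariantL₂ I₁ r ∘ F) U := by
  have hctr := connection_eqOn_of_eqOn_pullback hU hV hF hF' hFUV hr
    (fun x hx => hr0 _ (hFUV hx)) htr
  have hK := invariantK_eqOn_pullback hU hV hF hF' hFUV (contDiffOn_connection hV hr hr0) htI₁ hctr
  have hDK := covDeriv_eqOn_pullback 2 hU hV hF hF' hFUV (contDiffOn_invariantK hV hI₁ hr hr0)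
    hK hctr
  have htI₁C : ContDiffOn ℝ ∞ tI₁ U := ((contDiffOn_pullback 2 hU hF hI₁ hFUV).sub
    (contDiffOn_const.mul (contDiffOn_schwarzian hU hF hF'))).congr htI₁
  have htrC : ContDiffOn ℝ ∞ tr U := (contDiffOn_pullback 3 hU hF hr hFUV).congr htr
  have htr0 : ∀ x ∈ U, tr x ≠ 0 := fun x hx => by
    rw [htr hx]
    exact mul_ne_zero (pow_ne_zero _ (hF' x hx)) (hr0 _ (hFUV hx))
  intro x hx
  have := hF' x hx
  have := hr0 _ (hFUV hx)
  rw [invariantL₂_eqOn_covDeriv_div hU (htI₁C.differentiableOn (by simp)) htrC htr0 hx,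
    Function.comp_apply,
    invariantL₂_eqOn_covDeriv_div hV (hI₁.differentiableOn (by simp)) hr hr0 (hFUV hx)]
  dsimp only
  rw [hDK hx, htr hx]
  simp only [pullback]
  field_simp
  ring

end ThirdOrderLinearODE

end

open ThirdOrderLinearODE in
/-- `L₂ = (27I₁'r³ - 18I₁r²r' + 56r'³ - 72r''r'r + 18r'''r²)/r⁴`, with
`r = I₁' - 2I₀`, is an absolute invariant under a change of independent
variable `x → F(x)`: `L̃₂(x) = L₂(F(x))`. -/
theorem stmt_8 (a b a' b' : ℝ) (I J : Set ℝ)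
    (hI : I = Set.Ioo a b) (hJ : J = Set.Ioo a' b')
    (I₁ I₀ : ℝ → ℝ) (hI₁ : ContDiffOn ℝ (⊤ : ℕ∞) I₁ J) (hI₀ : ContDiffOn ℝ (⊤ : ℕ∞) I₀ J)
    (F : ℝ → ℝ) (hF : ContDiffOn ℝ (⊤ : ℕ∞) F I)
    (hF' : ∀ x ∈ I, deriv F x ≠ 0) (hFI : Set.MapsTo F I J)
    (SF : ℝ → ℝ)
    (hSF : ∀ x ∈ I, SF x = deriv (deriv (deriv F)) x / deriv F x
        - (3 / 2) * (deriv (deriv F) x / deriv F x) ^ 2)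
    (tI₁ tI₀ : ℝ → ℝ)
    (htI₁ : ∀ x ∈ I, tI₁ x = (deriv F x) ^ 2 * I₁ (F x) - 2 * SF x)
    (htI₀ : ∀ x ∈ I, tI₀ x = deriv F x * deriv (deriv F) x * I₁ (F x)
        + (deriv F x) ^ 3 * I₀ (F x) - deriv SF x)
    (r tr : ℝ → ℝ)
    (hr : ∀ u ∈ J, r u = deriv I₁ u - 2 * I₀ u)
    (htr : ∀ x ∈ I, tr x = deriv tI₁ x - 2 * tI₀ x)
    (hr0 : ∀ x ∈ I, r (F x) ≠ 0)
    (L₂ tL₂ : ℝ → ℝ)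
    (hL₂ : ∀ u ∈ J, L₂ u = (27 * deriv I₁ u * (r u) ^ 3 - 18 * I₁ u * (r u) ^ 2 * deriv r u
        + 56 * (deriv r u) ^ 3 - 72 * deriv (deriv r) u * deriv r u * r u
        + 18 * deriv (deriv (deriv r)) u * (r u) ^ 2) / (r u) ^ 4)
    (htL₂ : ∀ x ∈ I, tL₂ x = (27 * deriv tI₁ x * (tr x) ^ 3 - 18 * tI₁ x * (tr x) ^ 2 * deriv tr x
        + 56 * (deriv tr x) ^ 3 - 72 * deriv (deriv tr) x * deriv tr x * tr x
        + 18 * deriv (deriv (deriv tr)) x * (tr x) ^ 2) / (tr x) ^ 4) :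
    ∀ x ∈ I, tL₂ x = L₂ (F x) := by
  have hIo : IsOpen I := hI ▸ isOpen_Ioo
  have hJo : IsOpen J := hJ ▸ isOpen_Ioo
  have hrJ : ContDiffOn ℝ ∞ r J :=
    ((hI₁.deriv_of_isOpen' hJo).sub (contDiffOn_const.mul hI₀)).congr hr
  have hVo : IsOpen (J ∩ r ⁻¹' {0}ᶜ) :=
    hrJ.continuousOn.isOpen_inter_preimage hJo isOpen_compl_singleton
  have hSFd : DifferentiableOn ℝ SF I :=
    ((contDiffOn_schwarzian hIo hF hF').congr hSF).differentiableOn (by simp)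
  have htrI : EqOn tr (pullback 3 F r) I := fun x hx => by
    rw [htr x hx, ← relInvariant, relInvariant_eqOn_pullback hIo hJo hF hFI hI₁ hSFd htI₁ htI₀ hx]
    simp only [pullback, relInvariant, hr _ (hFI hx)]
  have htI₁I : EqOn tI₁ (fun x => pullback 2 F I₁ x - 2 * schwarzian F x) I := fun x hx => by
    rw [htI₁ x hx, hSF x hx]
    rfl
  intro x hx
  rw [htL₂ x hx, hL₂ _ (hFI hx)]
  exact invariantL₂_eqOn_comp hIo hVo hF hF' (fun y hy => ⟨hFI hy, hr0 y hy⟩)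
    (hI₁.mono inter_subset_left) (hrJ.mono inter_subset_left) (fun u hu => hu.2) htI₁I htrI hx
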